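/- arXiv:1404.6834 — 4 statements merged into one kernel-verified Lean document; each statement's English description precedes it below -/
import Mathlib

section
/- Let (Q, f) be a triangulation quiver and let k be a vertex of Q at which there is no loop. Let α and ᾱ be the two arrows starting at k. Then the six arrows α, f(α), f²(α), ᾱ, f(ᾱ), f²(ᾱ) are pairwise distinct (and they form two cycles of the permutation f). -/
/-!
Since `f³ = id`, every arrow lies on an `f`-orbit of size one or three. An arrow `a` starting at a
loop-free vertex cannot be fixed by `f` (else `t a = s (f a) = s a`), so the orbits of `α` and `ᾱ`
both have three elements. They are disjoint: `ᾱ = f α` would give `s ᾱ = t α`, and `ᾱ = f² α`,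
i.e. `f ᾱ = α`, would give `t ᾱ = s α`, each a loop at `k`.
-/

section OrbitsOfOrderThree

variable {A : Type*} {f : A → A} {a b x y : A}

theorem pairwise_ne_orbit_of_apply_ne (h3 : f (f (f a)) = a) (ha : f a ≠ a) :
    [a, f a, f (f a)].Pairwise (· ≠ ·) := by
  have h2 : f (f a) ≠ a := fun h => ha (by rwa [h] at h3)
  have h12 : f a ≠ f (f a) := fun h => h2 ((congrArg f h).trans h3)
  simp [ha.symm, h2.symm, h12]

theorem apply_mem_orbit (h3 : f (f (f a)) = a) (hx : x ∈ [a, f a, f (f a)]) :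
    f x ∈ [a, f a, f (f a)] := by
  simp only [List.mem_cons, List.not_mem_nil, or_false] at hx ⊢
  rcases hx with rfl | rfl | rfl <;> simp [h3]

theorem mem_orbit_of_orbits_meet (hf3 : ∀ x, f (f (f x)) = x)
    (hy : y ∈ [b, f b, f (f b)]) (hya : y ∈ [a, f a, f (f a)]) : b ∈ [a, f a, f (f a)] := by
  simp only [List.mem_cons, List.not_mem_nil, or_false] at hy
  rcases hy with rfl | rfl | rfl
  · exact hya
  · rw [← hf3 b]
    exact apply_mem_orbit (hf3 a) (apply_mem_orbit (hf3 a) hya)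
  · rw [← hf3 b]
    exact apply_mem_orbit (hf3 a) hya

theorem pairwise_ne_two_orbits (hf3 : ∀ x, f (f (f x)) = x) (ha : f a ≠ a) (hb : f b ≠ b)
    (hab : b ∉ [a, f a, f (f a)]) : [a, f a, f (f a), b, f b, f (f b)].Pairwise (· ≠ ·) := by
  refine List.pairwise_append.2
    ⟨pairwise_ne_orbit_of_apply_ne (hf3 a) ha, pairwise_ne_orbit_of_apply_ne (hf3 b) hb, ?_⟩
  rintro x hx y hy rfl
  exact hab (mem_orbit_of_orbits_meet hf3 hy hx)

end OrbitsOfOrderThree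

section RibbonQuiver

variable {V A : Type*} {s t : A → V} {f : A → A} {a b : A}

theorem apply_ne_self_of_target_ne_source (hsf : ∀ a, s (f a) = t a) (ha : t a ≠ s a) :
    f a ≠ a :=
  fun h => ha (by rw [← hsf, h])

theorem not_mem_orbit_of_source_eq (hsf : ∀ a, s (f a) = t a) (hf3 : ∀ a, f (f (f a)) = a)
    (hba : b ≠ a) (hs : s b = s a) (ha : t a ≠ s a) (hb : t b ≠ s b) :
    b ∉ [a, f a, f (f a)] := by
  simp only [List.mem_cons, List.not_mem_nil, or_false]
  rintro (rfl | rfl | rfl)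
  · exact hba rfl
  · exact ha (by rw [← hsf, hs])
  · exact hb (by rw [← hsf, hf3, hs])

end RibbonQuiver

theorem triangulationQuiver_six_distinct_arrows_general {V A : Type*}
    (s t : A → V) (f : A → A)
    (hsf : ∀ a : A, s (f a) = t a)
    (hf3 : ∀ a : A, f (f (f a)) = a)
    (bar : A → A) (hbar : ∀ a : A, bar a ≠ a ∧ s (bar a) = s a)
    (k : V) (hk : ∀ e : A, ¬ (s e = k ∧ t e = k))
    (α : A) (hα : s α = k) :
    [α, f α, f (f α), bar α, f (bar α), f (f (bar α))].Pairwise (· ≠ ·) := by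
  have hnoloop : ∀ e, s e = k → t e ≠ s e := fun e he ht => hk e ⟨he, ht.trans he⟩
  obtain ⟨hbar_ne, hbar_source⟩ := hbar α
  have hα_noloop := hnoloop α hα
  have hbar_noloop := hnoloop (bar α) (hbar_source.trans hα)
  exact pairwise_ne_two_orbits hf3
    (apply_ne_self_of_target_ne_source hsf hα_noloop)
    (apply_ne_self_of_target_ne_source hsf hbar_noloop)
    (not_mem_orbit_of_source_eq hsf hf3 hbar_ne hbar_source hα_noloop hbar_noloop)

/-- Let `(Q, f)` be a triangulation quiver (`f³ = id`) and `k` a vertex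
with no loop at it. If `α` and `ᾱ` are the two arrows starting at `k`, then the six
arrows `α, f(α), f²(α), ᾱ, f(ᾱ), f²(ᾱ)` are pairwise distinct. -/
theorem triangulationQuiver_six_distinct_arrows {V A : Type*} [Fintype V] [Fintype A]
    [DecidableEq V] [DecidableEq A]
    (s t : A → V) (f : A → A)
    (hf : Function.Bijective f)
    (hout : ∀ v : V, (Finset.univ.filter (fun a => s a = v)).card = 2)
    (hin : ∀ v : V, (Finset.univ.filter (fun a => t a = v)).card = 2)
    (hsf : ∀ a : A, s (f a) = t a)
    (hf3 : ∀ a : A, f (f (f a)) = a)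
    (bar : A → A) (hbar : ∀ a : A, bar a ≠ a ∧ s (bar a) = s a)
    (k : V) (hk : ∀ e : A, ¬ (s e = k ∧ t e = k))
    (α : A) (hα : s α = k) :
    [α, f α, f (f α), bar α, f (bar α), f (f (bar α))].Pairwise (· ≠ ·) :=
  triangulationQuiver_six_distinct_arrows_general s t f hsf hf3 bar hbar k hk α hα
end

section
/- Let (Q, f) be a triangulation quiver and let k be a vertex of Q without loops. Let α, ᾱ be the two arrows starting at k and set α₁ = α, β₁ = f(α), γ₁ = f²(α), α₂ = ᾱ, β₂ = f(ᾱ), γ₂ = f²(ᾱ). Then there is no 2-cycle in Q passing through k (i.e., there exist no arrows ε, δ with s(ε) = k = t(δ) and t(ε) = s(δ)) if and only if n_{α₁} > 2, n_{γ₁} > 2, n_{β₁} > 1 and n_{β₂} > 1. -/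
/-!
At the loop-free vertex `k = s α` the outgoing arrows are `α, ᾱ` and, since `t a = s (f a)` and
`f⁻¹ = f²`, the incoming ones are `γ₁ = f² α, γ₂ = f² ᾱ`. A 2-cycle `ε, δ` through `k` forces `δ`
to start where `f ε` does, so `δ ∈ {f ε, g ε}`; `δ = f ε` would make `f² ε` a loop at `k`, hence
the 2-cycles through `k` are exactly the equations `g ε = γⱼ` with `ε ∈ {α, ᾱ}`. Each of the four
equations is a short periodicity of `g`: `g α = γ₁ ↔ g β₁ = β₁`, `g ᾱ = γ₂ ↔ g β₂ = β₂`,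
`g α = γ₂ ↔ g² α = α` and, as `g γ₁ = ᾱ`, `g ᾱ = γ₁ ↔ g² γ₁ = γ₁`; while `g α ≠ α` and
`g γ₁ ≠ γ₁` always hold because `k` carries no loop.
-/

open Function Finset

theorem Finset.eq_or_eq_of_card_eq_two {α : Type*} {S : Finset α} {a b c : α} (hS : #S = 2)
    (ha : a ∈ S) (hb : b ∈ S) (hc : c ∈ S) (hab : a ≠ b) : c = a ∨ c = b := by
  by_contra! hne
  have : 2 < #S := two_lt_card.2 ⟨a, ha, b, hb, c, hc, hab, hne.1.symm, hne.2.symm⟩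
  omega

namespace Function

variable {α : Type*} {g : α → α} {x : α}

theorem one_lt_minimalPeriod_iff (hx : x ∈ periodicPts g) :
    1 < minimalPeriod g x ↔ g x ≠ x := by
  have := minimalPeriod_pos_of_mem_periodicPts hx
  rw [Ne, ← IsFixedPt, ← minimalPeriod_eq_one_iff_isFixedPt]
  omega

theorem two_lt_minimalPeriod_iff (hx : x ∈ periodicPts g) :
    2 < minimalPeriod g x ↔ g x ≠ x ∧ g (g x) ≠ x := by
  rw [← one_lt_minimalPeriod_iff hx]
  constructor
  · intro h
    refine ⟨by omega, fun h2 => ?_⟩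
    have := IsPeriodicPt.minimalPeriod_le two_pos (show IsPeriodicPt g 2 x from h2)
    omega
  · rintro ⟨h1, h2⟩
    by_contra! h
    have h2' : minimalPeriod g x = 2 := by omega
    have hp : IsPeriodicPt g 2 x := h2' ▸ isPeriodicPt_minimalPeriod g x
    exact h2 hp

end Function

namespace TriangulationQuiver

variable {A V : Type*} {s t : A → V} {f bar g : A → A}

theorem source_eq_iff_of_card_eq_two [Fintype A] [DecidableEq V]
    (hout : ∀ v : V, (univ.filter fun a => s a = v).card = 2)
    (hbar : ∀ a : A, bar a ≠ a ∧ s (bar a) = s a) (a c : A) :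
    s c = s a ↔ c = a ∨ c = bar a := by
  refine ⟨fun hc => eq_or_eq_of_card_eq_two (hout (s a)) ?_ ?_ ?_ (hbar a).1.symm, ?_⟩
  · simp
  · simp [(hbar a).2]
  · simpa using hc
  · rintro (rfl | rfl)
    exacts [rfl, (hbar a).2]

theorem involutive_of_source_eq_iff (hsource : ∀ a c, s c = s a ↔ c = a ∨ c = bar a)
    (hne : ∀ a, bar a ≠ a) : Involutive bar := fun a => by
  have h : s (bar (bar a)) = s a := ((hsource _ _).2 (.inr rfl)).trans ((hsource _ _).2 (.inr rfl))
  exact ((hsource a _).1 h).resolve_right (hne (bar a))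

theorem apply_eq_iff_eq_apply_apply (hf3 : ∀ a, f (f (f a)) = a) {x y : A} :
    f x = y ↔ x = f (f y) := by
  constructor <;> rintro rfl
  exacts [(hf3 x).symm, hf3 y]

theorem target_eq_source_iff (hsource : ∀ a c, s c = s a ↔ c = a ∨ c = bar a)
    (hsf : ∀ a, s (f a) = t a) (hf3 : ∀ a, f (f (f a)) = a) (a x : A) :
    t x = s a ↔ x = f (f a) ∨ x = f (f (bar a)) := by
  rw [← hsf, hsource, apply_eq_iff_eq_apply_apply hf3, apply_eq_iff_eq_apply_apply hf3]

theorem exists_source_eq_iff (hsource : ∀ a c, s c = s a ↔ c = a ∨ c = bar a) (a : A)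
    (P : A → Prop) : (∃ e, s e = s a ∧ P e) ↔ P a ∨ P (bar a) := by
  simp only [hsource, or_and_right, exists_or, exists_eq_left]

theorem exists_two_cycle_iff (hsource : ∀ a c, s c = s a ↔ c = a ∨ c = bar a)
    (hsf : ∀ a, s (f a) = t a) (hf3 : ∀ a, f (f (f a)) = a) (hg : ∀ a, g a = bar (f a))
    {k : V} (hk : ∀ e, ¬ (s e = k ∧ t e = k)) :
    (∃ ε δ, s ε = k ∧ t δ = k ∧ t ε = s δ) ↔ ∃ ε, s ε = k ∧ t (g ε) = k := by
  constructor
  · rintro ⟨ε, δ, hε, hδ, hεδ⟩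
    rcases (hsource (f ε) δ).1 (hεδ.symm.trans (hsf ε).symm) with rfl | rfl
    · exact (hk (f (f ε)) ⟨(hsf _).trans hδ, by rw [← hsf, hf3, hε]⟩).elim
    · exact ⟨ε, hε, hg ε ▸ hδ⟩
  · rintro ⟨ε, hε, hgε⟩
    exact ⟨ε, g ε, hε, hgε, by rw [hg, (hsource _ _).2 (.inr rfl), hsf]⟩

theorem apply_f_eq_self_iff (hg : ∀ a, g a = bar (f a)) (hinv : Involutive bar) (a : A) :
    g (f a) = f a ↔ g a = f (f a) := by
  rw [hg, hg, hinv.eq_iff, eq_comm]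

theorem apply_apply_eq_self_iff (hg : ∀ a, g a = bar (f a)) (hinv : Involutive bar)
    (hf3 : ∀ a, f (f (f a)) = a) (a : A) : g (g a) = a ↔ g a = f (f (bar a)) := by
  rw [hg (g a), hinv.eq_iff, apply_eq_iff_eq_apply_apply hf3]

theorem apply_ne_self_of_target_ne_source (hsource : ∀ a c, s c = s a ↔ c = a ∨ c = bar a)
    (hsf : ∀ a, s (f a) = t a) (hg : ∀ a, g a = bar (f a)) {a : A} (ha : t a ≠ s a) :
    g a ≠ a := fun h => ha <| by rw [← hsf, ← (hsource _ _).2 (.inr rfl), ← hg, h]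

end TriangulationQuiver

open TriangulationQuiver in
theorem triangulationQuiver_no_two_cycle_iff_general {V A : Type*} [Fintype A] [DecidableEq V]
    (s t : A → V) (f : A → A)
    (hf : Function.Bijective f)
    (hout : ∀ v : V, (Finset.univ.filter (fun a => s a = v)).card = 2)
    (hsf : ∀ a : A, s (f a) = t a)
    (hf3 : ∀ a : A, f (f (f a)) = a)
    (bar : A → A) (hbar : ∀ a : A, bar a ≠ a ∧ s (bar a) = s a)
    (g : A → A) (hg : ∀ a : A, g a = bar (f a))
    (k : V) (hk : ∀ e : A, ¬ (s e = k ∧ t e = k))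
    (α : A) (hα : s α = k) :
    (¬ ∃ ε δ : A, s ε = k ∧ t δ = k ∧ t ε = s δ) ↔
      (2 < Function.minimalPeriod g α ∧
        2 < Function.minimalPeriod g (f (f α)) ∧
        1 < Function.minimalPeriod g (f α) ∧
        1 < Function.minimalPeriod g (f (bar α))) := by
  subst hα
  have hsource := source_eq_iff_of_card_eq_two hout hbar
  have hinv := involutive_of_source_eq_iff hsource fun a => (hbar a).1
  have hper : ∀ x, x ∈ periodicPts g := fun x =>
    (show Injective g from funext hg ▸ hinv.injective.comp hf.1).mem_periodicPts x
  have hgγ₁ : g (f (f α)) = bar α := by rw [hg, hf3]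
  have hgα : g α ≠ α :=
    apply_ne_self_of_target_ne_source hsource hsf hg fun h => hk α ⟨rfl, h⟩
  have hγ₁ : bar α ≠ f (f α) := fun h => hk (bar α) ⟨(hbar α).2, by
    rw [h, ← hsf, hf3]⟩
  rw [exists_two_cycle_iff hsource hsf hf3 hg hk, exists_source_eq_iff hsource,
    target_eq_source_iff hsource hsf hf3, target_eq_source_iff hsource hsf hf3,
    two_lt_minimalPeriod_iff (hper _), two_lt_minimalPeriod_iff (hper _),
    one_lt_minimalPeriod_iff (hper _), one_lt_minimalPeriod_iff (hper _), hgγ₁]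
  simp only [ne_eq, apply_apply_eq_self_iff hg hinv hf3, apply_f_eq_self_iff hg hinv]
  tauto

/-- Let `(Q, f)` be a triangulation quiver and `k` a vertex without
loops, with `α, ᾱ` the two arrows starting at `k`, and set `α₁ = α`, `β₁ = f(α)`,
`γ₁ = f²(α)`, `α₂ = ᾱ`, `β₂ = f(ᾱ)`, `γ₂ = f²(ᾱ)`. Then there is no 2-cycle in `Q`
through `k` iff `n_{α₁} > 2`, `n_{γ₁} > 2`, `n_{β₁} > 1` and `n_{β₂} > 1`, where
`n_a` is the least `n > 0` with `gⁿ(a) = a` (the minimal period of `g` at `a`). -/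
theorem triangulationQuiver_no_two_cycle_iff {V A : Type*} [Fintype V] [Fintype A]
    [DecidableEq V] [DecidableEq A]
    (s t : A → V) (f : A → A)
    (hf : Function.Bijective f)
    (hout : ∀ v : V, (Finset.univ.filter (fun a => s a = v)).card = 2)
    (hin : ∀ v : V, (Finset.univ.filter (fun a => t a = v)).card = 2)
    (hsf : ∀ a : A, s (f a) = t a)
    (hf3 : ∀ a : A, f (f (f a)) = a)
    (bar : A → A) (hbar : ∀ a : A, bar a ≠ a ∧ s (bar a) = s a)
    (g : A → A) (hg : ∀ a : A, g a = bar (f a))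
    (k : V) (hk : ∀ e : A, ¬ (s e = k ∧ t e = k))
    (α : A) (hα : s α = k) :
    (¬ ∃ ε δ : A, s ε = k ∧ t δ = k ∧ t ε = s δ) ↔
      (2 < Function.minimalPeriod g α ∧
        2 < Function.minimalPeriod g (f (f α)) ∧
        1 < Function.minimalPeriod g (f α) ∧
        1 < Function.minimalPeriod g (f (bar α))) :=
  triangulationQuiver_no_two_cycle_iff_general s t f hf hout hsf hf3 bar hbar g hg k hk α hα
end

section
/- Let (Q, f) be a connected triangulation quiver and let m : Q₁ → ℤ_{>0} be a g-invariant admissible function of multiplicities. Then m_α · n_α = 3 for all arrows α if and only if (Q, f) together with m is isomorphic, via an isomorphism of ribbon quivers preserving the multiplicity function, either to the punctured-monogon model with multiplicities (3,1) or to the tetrahedron model with all multiplicities 1. -/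
/-- Source map of the punctured-monogon triangulation quiver: arrows
`α : 1→1`, `β : 1→2`, `γ : 2→1`, `η : 2→2` are indexed by `0, 1, 2, 3`. -/
def puncturedMonogonS : Fin 4 → Fin 2 := ![0, 0, 1, 1]

/-- Target map of the punctured-monogon triangulation quiver. -/
def puncturedMonogonT : Fin 4 → Fin 2 := ![0, 1, 0, 1]

/-- The permutation `f` of the punctured-monogon triangulation quiver:
`f(α) = β`, `f(β) = γ`, `f(γ) = α`, `f(η) = η`. -/
def puncturedMonogonF : Fin 4 → Fin 4 := ![1, 2, 0, 3]

/-- Multiplicities `(3, 1)` on the punctured monogon: `m(α) = 3`, `m(β) = m(γ) = m(η) = 1`. -/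
def puncturedMonogonM : Fin 4 → ℕ := ![3, 1, 1, 1]

/-- The four cyclically ordered triples `(1,2,3), (1,3,4), (1,4,2), (2,4,3)` of the
tetrahedron (here with elements `0, 1, 2, 3` of `Fin 4`). -/
def tetTriple : Fin 4 → Fin 3 → Fin 4 := ![![0, 1, 2], ![0, 2, 3], ![0, 3, 1], ![1, 3, 2]]

/-- Source map of the tetrahedron triangulation quiver: the arrow `(i, j)` goes from the
2-element subset `{tᵢ(j), tᵢ(j+1)}` to `{tᵢ(j+1), tᵢ(j+2)}`, where `tᵢ` is the `i`-th
triple; vertices are the six 2-element subsets of `Fin 4`. -/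
def tetS (p : Fin 4 × Fin 3) : Finset (Fin 4) := {tetTriple p.1 p.2, tetTriple p.1 (p.2 + 1)}

/-- Target map of the tetrahedron triangulation quiver. -/
def tetTgt (p : Fin 4 × Fin 3) : Finset (Fin 4) :=
  {tetTriple p.1 (p.2 + 1), tetTriple p.1 (p.2 + 2)}

/-- The permutation `f` of the tetrahedron triangulation quiver, cycling the three arrows
of each triple. -/
def tetF (p : Fin 4 × Fin 3) : Fin 4 × Fin 3 := (p.1, p.2 + 1)

/-!
The quiver is encoded by the two permutations `f` and `bar` of its arrows (the vertices are the
`bar`-orbits and `t = s ∘ f`). The condition `m_α n_α = 3` says that every `g`-orbit has length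
`1` or `3`, so `f³ = bar² = g³ = 1` and `⟨f, bar⟩` acts transitively (by connectivity) through a
quotient of the triangle group `⟨x, y | x² = y³ = (xy)³ = 1⟩ ≅ A₄`. The tetrahedron is the regular
`A₄`-set and the punctured monogon its quotient by `⟨g⟩`; which one occurs depends on whether
`g` has a fixed point. Concretely, the arrows of the model are written as words in `f` and `bar`
applied to one arrow of `Q`. The three relations make this map equivariant and connectivity makes
it surjective. It is injective because some word moves every pair of distinct model arrows onto a
pair `(x, bar x)` (or, for the tetrahedron, `(x, f x)`), and such a pair cannot collapse in `Q`.
-/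

open Function

theorem Function.Semiconj.minimalPeriod_eq {α β : Type*} {fa : α → α} {fb : β → β} {φ : α → β}
    (h : Semiconj φ fa fb) (hφ : Injective φ) (x : α) :
    minimalPeriod fb (φ x) = minimalPeriod fa x :=
  minimalPeriod_eq_minimalPeriod_iff.2 fun n => by
    simp only [IsPeriodicPt, IsFixedPt, ← (h.iterate_right n).eq, hφ.eq_iff]

theorem mul_minimalPeriod_eq_iff_of_semiconj {α β : Type*} {g : α → α} {G : β → β} {φ : α → β}
    (h : Semiconj φ g G) (hφ : Injective φ) {M : β → ℕ} {n : ℕ}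
    (hM : ∀ b, M b * minimalPeriod G b = n) (hn : n ≠ 0) {k : ℕ} {a : α} :
    k * minimalPeriod g a = n ↔ k = M (φ a) := by
  have hMa := hM (φ a)
  rw [h.minimalPeriod_eq hφ] at hMa
  have hpos : 0 < minimalPeriod g a := Nat.pos_of_ne_zero fun h0 => hn (by simp [← hMa, h0])
  exact ⟨fun hk => Nat.eq_of_mul_eq_mul_right hpos (hk.trans hMa.symm), fun hk => hk ▸ hMa⟩

section Separation

variable {A B : Type*}

/-- Some word of length at most `n` in `F` and `Bar` maps the pair `(b, b')` into `D`. -/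
def Separated (D : B → B → Prop) (F Bar : B → B) : ℕ → B → B → Prop
  | 0, b, b' => D b b'
  | n + 1, b, b' =>
    Separated D F Bar n b b' ∨ Separated D F Bar n (F b) (F b') ∨
      Separated D F Bar n (Bar b) (Bar b')

instance Separated.decidable {D : B → B → Prop} [DecidableRel D] {F Bar : B → B} :
    ∀ n, DecidableRel (Separated D F Bar n)
  | 0 => fun b b' => inferInstanceAs (Decidable (D b b'))
  | n + 1 => fun _ _ =>
    have := Separated.decidable (D := D) (F := F) (Bar := Bar) n
    inferInstanceAs (Decidable (_ ∨ _ ∨ _))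

theorem Separated.apply_ne {D : B → B → Prop} {F Bar : B → B} {f bar : A → A} {ψ : B → A}
    (hF : Semiconj ψ F f) (hBar : Semiconj ψ Bar bar) (hD : ∀ b b', D b b' → ψ b ≠ ψ b') :
    ∀ {n : ℕ} {b b' : B}, Separated D F Bar n b b' → ψ b ≠ ψ b'
  | 0, b, b', h => hD b b' h
  | _ + 1, _, _, .inl h => apply_ne hF hBar hD h
  | _ + 1, _, _, .inr (.inl h) => fun he => apply_ne hF hBar hD h (by rw [hF.eq, hF.eq, he])
  | _ + 1, _, _, .inr (.inr h) => fun he => apply_ne hF hBar hD h (by rw [hBar.eq, hBar.eq, he])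

end Separation

structure IsTriangulationQuiver {V A : Type*} (s t : A → V) (f bar : A → A) : Prop where
  bar_ne : ∀ a, bar a ≠ a
  source_bar : ∀ a, s (bar a) = s a
  eq_or_eq_bar_of_source_eq : ∀ a b, s b = s a → b = a ∨ b = bar a
  source_f : ∀ a, s (f a) = t a
  f_f_f : ∀ a, f (f (f a)) = a

namespace IsTriangulationQuiver

variable {V A : Type*} {s t : A → V} {f bar : A → A}

theorem of_card [Fintype A] [DecidableEq V]
    (hout : ∀ v : V, (Finset.univ.filter (fun a => s a = v)).card = 2)
    (hbar : ∀ a : A, bar a ≠ a ∧ s (bar a) = s a) (hsf : ∀ a : A, s (f a) = t a)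
    (hf3 : ∀ a : A, f (f (f a)) = a) : IsTriangulationQuiver s t f bar where
  bar_ne a := (hbar a).1
  source_bar a := (hbar a).2
  eq_or_eq_bar_of_source_eq a b hab := by
    classical
    have hfiber : ({a, bar a} : Finset A) = Finset.univ.filter (fun c => s c = s a) :=
      Finset.eq_of_subset_of_card_le (by simp [Finset.insert_subset_iff, (hbar a).2])
        (by rw [hout, Finset.card_pair (hbar a).1.symm])
    simpa using hfiber.ge (by simpa using hab)
  source_f := hsf
  f_f_f := hf3

theorem bar_bar (h : IsTriangulationQuiver s t f bar) (a : A) : bar (bar a) = a :=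
  (h.eq_or_eq_bar_of_source_eq a _ (by rw [h.source_bar, h.source_bar])).resolve_right
    (h.bar_ne _)

theorem eq_univ_of_closed (h : IsTriangulationQuiver s t f bar)
    (hconn : ∀ u v : V, Relation.EqvGen (fun x y => ∃ e : A, s e = x ∧ t e = y) u v)
    {S : Set A} (hS : S.Nonempty) (hfS : ∀ a ∈ S, f a ∈ S) (hbarS : ∀ a ∈ S, bar a ∈ S) :
    S = Set.univ := by
  have mem_of_source_eq : ∀ {a b}, s b = s a → a ∈ S → b ∈ S := fun hab ha =>
    (h.eq_or_eq_bar_of_source_eq _ _ hab).elim (· ▸ ha) (· ▸ hbarS _ ha)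
  have hstep : ∀ x y, (∃ e, s e = x ∧ t e = y) → (x ∈ s '' S ↔ y ∈ s '' S) := by
    rintro _ _ ⟨e, rfl, rfl⟩
    refine ⟨fun ⟨a, ha, hae⟩ => ⟨f e, hfS _ (mem_of_source_eq hae.symm ha), h.source_f e⟩,
      fun ⟨a, ha, hae⟩ => ⟨e, ?_, rfl⟩⟩
    have hfe : f e ∈ S := mem_of_source_eq ((h.source_f e).trans hae.symm) ha
    simpa only [h.f_f_f] using hfS _ (hfS _ hfe)
  have hequiv : Equivalence fun x y => (x ∈ s '' S ↔ y ∈ s '' S) :=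
    ⟨fun _ => Iff.rfl, Iff.symm, Iff.trans⟩
  obtain ⟨a, ha⟩ := hS
  refine Set.eq_univ_of_forall fun b => ?_
  obtain ⟨c, hc, hcb⟩ :=
    (hequiv.eqvGen_iff.1 (Relation.EqvGen.mono hstep _ _ (hconn (s a) (s b)))).1 ⟨a, ha, rfl⟩
  exact mem_of_source_eq hcb.symm hc

theorem bar_f_bar_f (h : IsTriangulationQuiver s t f bar)
    (hg3 : ∀ a, bar (f (bar (f (bar (f a))))) = a) (a : A) :
    bar (f (bar (f a))) = f (f (bar a)) := by
  simpa only [h.f_f_f, h.bar_bar] using hg3 (f (f (bar a)))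

theorem bar_f_f_bar (h : IsTriangulationQuiver s t f bar)
    (hg3 : ∀ a, bar (f (bar (f (bar (f a))))) = a) (a : A) :
    bar (f (f (bar a))) = f (bar (f a)) := by
  rw [← h.bar_f_bar_f hg3, h.bar_bar]

theorem semiconj_bar {W B : Type*} {S T : B → W} {F Bar : B → B}
    (h : IsTriangulationQuiver s t f bar) (hB : IsTriangulationQuiver S T F Bar) {φ : A → B}
    (hφ : Injective φ) {φ₀ : V → W} (hS : ∀ e, S (φ e) = φ₀ (s e)) : Semiconj φ bar Bar :=
  fun e => (hB.eq_or_eq_bar_of_source_eq _ _ (by rw [hS, hS, h.source_bar])).resolve_left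
    (hφ.ne (h.bar_ne e))

theorem exists_vertex_map {W B : Type*} {S T : B → W} {F Bar : B → B}
    (h : IsTriangulationQuiver s t f bar) (hB : IsTriangulationQuiver S T F Bar)
    (hs : Surjective s) (φ : A ≃ B) (hφf : Semiconj φ f F) (hφbar : Semiconj φ bar Bar) :
    ∃ φ₀ : V → W, Injective φ₀ ∧ Set.range φ₀ = Set.range S ∧
      (∀ e, S (φ e) = φ₀ (s e)) ∧ (∀ e, T (φ e) = φ₀ (t e)) := by
  let φ₀ : V → W := fun v => S (φ (surjInv hs v))
  have hsource : ∀ e, S (φ e) = φ₀ (s e) := fun e => by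
    rcases h.eq_or_eq_bar_of_source_eq e _ (surjInv_eq hs (s e)) with he | he <;>
      simp only [φ₀, he, hφbar.eq, hB.source_bar]
  refine ⟨φ₀, fun u v huv => ?_, ?_, hsource, fun e => ?_⟩
  · obtain ⟨e, rfl⟩ := hs u
    obtain ⟨e', rfl⟩ := hs v
    rw [← hsource, ← hsource] at huv
    rcases hB.eq_or_eq_bar_of_source_eq _ _ huv.symm with he | he
    · rw [φ.injective he]
    · rw [← hφbar.eq] at he
      rw [φ.injective he, h.source_bar]
  · refine Set.Subset.antisymm (Set.range_subset_iff.2 fun v => ⟨_, rfl⟩) ?_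
    rintro _ ⟨b, rfl⟩
    exact ⟨s (φ.symm b), by rw [← hsource, φ.apply_symm_apply]⟩
  · rw [← hB.source_f, ← hφf.eq, hsource, h.source_f]

theorem mul_minimalPeriod_eq_three_iff {W B : Type*} {S T : B → W} {F Bar : B → B}
    (h : IsTriangulationQuiver s t f bar) (hB : IsTriangulationQuiver S T F Bar) {M : B → ℕ}
    (hM : ∀ b, M b * minimalPeriod (Bar ∘ F) b = 3) {m : A → ℕ} (φ : A ≃ B)
    (hφf : Semiconj φ f F) {φ₀ : V → W} (hS : ∀ e, S (φ e) = φ₀ (s e)) (e : A) :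
    m e * minimalPeriod (bar ∘ f) e = 3 ↔ m e = M (φ e) :=
  mul_minimalPeriod_eq_iff_of_semiconj ((h.semiconj_bar hB φ.injective hS).comp_right hφf)
    φ.injective hM three_ne_zero

theorem exists_equiv_of_separated {B : Type*} [Nonempty B] {F Bar : B → B}
    (h : IsTriangulationQuiver s t f bar)
    (hconn : ∀ u v : V, Relation.EqvGen (fun x y => ∃ e : A, s e = x ∧ t e = y) u v)
    {ψ : B → A} (hF : Semiconj ψ F f) (hBar : Semiconj ψ Bar bar)
    {D : B → B → Prop} (hD : ∀ b b', D b b' → ψ b ≠ ψ b') {n : ℕ}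
    (hsep : ∀ b b', b ≠ b' → Separated D F Bar n b b') :
    ∃ φ : A ≃ B, Semiconj φ f F ∧ Semiconj φ bar Bar := by
  have hinj : Injective ψ := fun b b' he =>
    by_contra fun hne => Separated.apply_ne hF hBar hD (hsep b b' hne) he
  have hsurj : Surjective ψ := Set.range_eq_univ.1 <|
    h.eq_univ_of_closed hconn (Set.range_nonempty ψ)
      (by rintro _ ⟨b, rfl⟩; exact ⟨F b, hF.eq b⟩) (by rintro _ ⟨b, rfl⟩; exact ⟨Bar b, hBar.eq b⟩)
  let e := Equiv.ofBijective ψ ⟨hinj, hsurj⟩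
  exact ⟨e.symm, hF.inverse_left e.symm_apply_apply e.apply_symm_apply,
    hBar.inverse_left e.symm_apply_apply e.apply_symm_apply⟩

end IsTriangulationQuiver

def puncturedMonogonBar : Fin 4 → Fin 4 := ![1, 0, 3, 2]

theorem isTriangulationQuiver_puncturedMonogon :
    IsTriangulationQuiver puncturedMonogonS puncturedMonogonT puncturedMonogonF
      puncturedMonogonBar := by
  constructor <;> decide

theorem puncturedMonogon_mul_minimalPeriod (b : Fin 4) :
    puncturedMonogonM b * minimalPeriod (puncturedMonogonBar ∘ puncturedMonogonF) b = 3 := by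
  fin_cases b
  · rw [minimalPeriod_eq_one_iff_isFixedPt.2 (by decide)]; rfl
  all_goals rw [minimalPeriod_eq_prime (p := 3) (by decide) (by decide)]; rfl

/-- The other arrow starting at `tetS p`. -/
def tetBar (p : Fin 4 × Fin 3) : Fin 4 × Fin 3 :=
  ![![(2, 2), (3, 2), (1, 0)], ![(0, 2), (3, 1), (2, 0)], ![(1, 2), (3, 0), (0, 0)],
    ![(2, 1), (1, 1), (0, 1)]] p.1 p.2

theorem isTriangulationQuiver_tetrahedron : IsTriangulationQuiver tetS tetTgt tetF tetBar := by
  constructor <;> decide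

theorem tetrahedron_mul_minimalPeriod (b : Fin 4 × Fin 3) :
    1 * minimalPeriod (tetBar ∘ tetF) b = 3 := by
  rw [one_mul, minimalPeriod_eq_prime (p := 3) (by revert b; decide) (by revert b; decide)]

theorem range_tetS : Set.range tetS = {S : Finset (Fin 4) | S.card = 2} := by
  ext S
  refine ⟨?_, fun hS => ?_⟩
  · rintro ⟨p, rfl⟩
    revert p
    decide
  · revert S
    decide

namespace IsTriangulationQuiver

variable {V A : Type*} {s t : A → V} {f bar : A → A}

theorem exists_equiv_puncturedMonogon (h : IsTriangulationQuiver s t f bar)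
    (hconn : ∀ u v : V, Relation.EqvGen (fun x y => ∃ e : A, s e = x ∧ t e = y) u v)
    (hg3 : ∀ a, bar (f (bar (f (bar (f a))))) = a) {a : A} (ha : bar (f a) = a) :
    ∃ φ : A ≃ Fin 4, Semiconj φ f puncturedMonogonF ∧ Semiconj φ bar puncturedMonogonBar := by
  have hfa : f a = bar a := by rw [← h.bar_bar (f a), ha]
  have hη : f (bar (f (f a))) = bar (f (f a)) := by
    rw [← h.bar_f_f_bar hg3, ha]
  let ψ : Fin 4 → A := ![a, f a, f (f a), bar (f (f a))]
  have hF : Semiconj ψ puncturedMonogonF f := by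
    intro i
    fin_cases i <;> simp [ψ, puncturedMonogonF, h.f_f_f, hη]
  have hBar : Semiconj ψ puncturedMonogonBar bar := by
    intro i
    fin_cases i <;> simp [ψ, puncturedMonogonBar, h.bar_bar, hfa]
  refine h.exists_equiv_of_separated hconn hF hBar (D := fun b b' => b' = puncturedMonogonBar b)
    ?_ (n := 2) (by decide)
  rintro b _ rfl
  rw [hBar.eq]
  exact (h.bar_ne _).symm

theorem exists_equiv_tetrahedron (h : IsTriangulationQuiver s t f bar)
    (hconn : ∀ u v : V, Relation.EqvGen (fun x y => ∃ e : A, s e = x ∧ t e = y) u v)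
    (hg3 : ∀ a, bar (f (bar (f (bar (f a))))) = a) (hg_ne : ∀ a, bar (f a) ≠ a) (a : A) :
    ∃ φ : A ≃ Fin 4 × Fin 3, Semiconj φ f tetF ∧ Semiconj φ bar tetBar := by
  have hf_ne : ∀ x, f x ≠ x := fun x hx => hg_ne (f (bar x)) <| by
    rw [h.bar_f_f_bar hg3, hx]
  let ψ : Fin 4 × Fin 3 → A := fun p =>
    f^[p.2] (![a, bar (f (f a)), f (bar a), f (bar (f a))] p.1)
  have hF : Semiconj ψ tetF f := by
    rintro ⟨i, j⟩
    fin_cases i <;> fin_cases j <;> simp [ψ, tetF, h.f_f_f]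
  have hBar : Semiconj ψ tetBar bar := by
    rintro ⟨i, j⟩
    fin_cases i <;> fin_cases j <;>
      simp [ψ, tetBar, h.f_f_f, h.bar_bar, h.bar_f_bar_f hg3, h.bar_f_f_bar hg3,
        (h.bar_f_bar_f hg3 (f (f a))).symm]
  refine h.exists_equiv_of_separated hconn hF hBar
    (D := fun b b' => b' = tetBar b ∨ b' = tetF b ∨ b = tetF b') ?_ (n := 3) (by decide)
  rintro b _ (rfl | rfl | rfl)
  · rw [hBar.eq]; exact (h.bar_ne _).symm
  · rw [hF.eq]; exact (hf_ne _).symm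
  · rw [hF.eq]; exact hf_ne _

end IsTriangulationQuiver

theorem triangulationQuiver_exceptional_classification_general {V A : Type*}
    [Fintype A] [DecidableEq V]
    (s t : A → V) (f : A → A)
    (hout : ∀ v : V, (Finset.univ.filter (fun a => s a = v)).card = 2)
    (hsf : ∀ a : A, s (f a) = t a)
    (hf3 : ∀ a : A, f (f (f a)) = a)
    (bar : A → A) (hbar : ∀ a : A, bar a ≠ a ∧ s (bar a) = s a)
    (g : A → A) (hg : ∀ a : A, g a = bar (f a))
    (hne : Nonempty V)
    (hconn : ∀ u v : V, Relation.EqvGen (fun x y => ∃ e : A, s e = x ∧ t e = y) u v)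
    (m : A → ℕ) :
    (∀ a : A, m a * Function.minimalPeriod g a = 3) ↔
      ((∃ (φ₀ : V ≃ Fin 2) (φ₁ : A ≃ Fin 4),
          (∀ e : A, puncturedMonogonS (φ₁ e) = φ₀ (s e)) ∧
          (∀ e : A, puncturedMonogonT (φ₁ e) = φ₀ (t e)) ∧
          (∀ e : A, φ₁ (f e) = puncturedMonogonF (φ₁ e)) ∧
          (∀ e : A, m e = puncturedMonogonM (φ₁ e))) ∨
        (∃ (φ₀ : V → Finset (Fin 4)) (φ₁ : A ≃ Fin 4 × Fin 3),
          Function.Injective φ₀ ∧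
          Set.range φ₀ = {S : Finset (Fin 4) | S.card = 2} ∧
          (∀ e : A, tetS (φ₁ e) = φ₀ (s e)) ∧
          (∀ e : A, tetTgt (φ₁ e) = φ₀ (t e)) ∧
          (∀ e : A, φ₁ (f e) = tetF (φ₁ e)) ∧
          (∀ e : A, m e = 1))) := by
  obtain rfl : g = bar ∘ f := funext hg
  have h := IsTriangulationQuiver.of_card hout hbar hsf hf3
  have hs : Surjective s := fun v =>
    let ⟨a, ha⟩ := Finset.card_pos.1 (hout v ▸ two_pos); ⟨a, (Finset.mem_filter.1 ha).2⟩
  have hmonogon := h.mul_minimalPeriod_eq_three_iff (m := m)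
    isTriangulationQuiver_puncturedMonogon puncturedMonogon_mul_minimalPeriod
  have htetrahedron := h.mul_minimalPeriod_eq_three_iff (m := m)
    isTriangulationQuiver_tetrahedron tetrahedron_mul_minimalPeriod
  refine ⟨fun hm => ?_, ?_⟩
  · have hg3 (a : A) : bar (f (bar (f (bar (f a))))) = a :=
      isPeriodicPt_iff_minimalPeriod_dvd.2 (Dvd.intro_left _ (hm a))
    by_cases hfix : ∃ a, bar (f a) = a
    · obtain ⟨a, ha⟩ := hfix
      obtain ⟨φ, hφf, hφbar⟩ := h.exists_equiv_puncturedMonogon hconn hg3 ha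
      obtain ⟨φ₀, hinj, hrange, hS, hT⟩ :=
        h.exists_vertex_map isTriangulationQuiver_puncturedMonogon hs φ hφf hφbar
      refine Or.inl ⟨.ofBijective φ₀ ⟨hinj, ?_⟩, φ, hS, hT, hφf,
        fun e => (hmonogon φ hφf hS e).1 (hm e)⟩
      rw [← Set.range_eq_univ, hrange, Set.range_eq_univ]
      decide
    · obtain ⟨a⟩ : Nonempty A := hne.map (surjInv hs)
      obtain ⟨φ, hφf, hφbar⟩ := h.exists_equiv_tetrahedron hconn hg3 (not_exists.1 hfix) a
      obtain ⟨φ₀, hinj, hrange, hS, hT⟩ :=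
        h.exists_vertex_map isTriangulationQuiver_tetrahedron hs φ hφf hφbar
      exact Or.inr ⟨φ₀, φ, hinj, hrange.trans range_tetS, hS, hT, hφf,
        fun e => (htetrahedron φ hφf hS e).1 (hm e)⟩
  · rintro (⟨φ₀, φ, hS, -, hφf, hM⟩ | ⟨φ₀, φ, -, -, hS, -, hφf, hM⟩) a
    exacts [(hmonogon φ hφf hS a).2 (hM a), (htetrahedron φ hφf hS a).2 (hM a)]

/-- Let `(Q, f)` be a connected triangulation quiver with a
`g`-invariant admissible multiplicity function `m`. Then `m_α · n_α = 3` for all arrows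
iff `(Q, f, m)` is isomorphic (as a ribbon quiver with multiplicities) either to the
punctured monogon with multiplicities `(3, 1)` or to the tetrahedron with all
multiplicities `1`. -/
theorem triangulationQuiver_exceptional_classification {V A : Type*} [Fintype V]
    [Fintype A] [DecidableEq V] [DecidableEq A]
    (s t : A → V) (f : A → A)
    (hf : Function.Bijective f)
    (hout : ∀ v : V, (Finset.univ.filter (fun a => s a = v)).card = 2)
    (hin : ∀ v : V, (Finset.univ.filter (fun a => t a = v)).card = 2)
    (hsf : ∀ a : A, s (f a) = t a)
    (hf3 : ∀ a : A, f (f (f a)) = a)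
    (bar : A → A) (hbar : ∀ a : A, bar a ≠ a ∧ s (bar a) = s a)
    (g : A → A) (hg : ∀ a : A, g a = bar (f a))
    (hne : Nonempty V)
    (hconn : ∀ u v : V, Relation.EqvGen (fun x y => ∃ e : A, s e = x ∧ t e = y) u v)
    (m : A → ℕ) (hmpos : ∀ a : A, 0 < m a)
    (hminv : ∀ a : A, m (g a) = m a)
    (hadm : ∀ a : A, 3 ≤ m a * Function.minimalPeriod g a) :
    (∀ a : A, m a * Function.minimalPeriod g a = 3) ↔
      ((∃ (φ₀ : V ≃ Fin 2) (φ₁ : A ≃ Fin 4),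
          (∀ e : A, puncturedMonogonS (φ₁ e) = φ₀ (s e)) ∧
          (∀ e : A, puncturedMonogonT (φ₁ e) = φ₀ (t e)) ∧
          (∀ e : A, φ₁ (f e) = puncturedMonogonF (φ₁ e)) ∧
          (∀ e : A, m e = puncturedMonogonM (φ₁ e))) ∨
        (∃ (φ₀ : V → Finset (Fin 4)) (φ₁ : A ≃ Fin 4 × Fin 3),
          Function.Injective φ₀ ∧
          Set.range φ₀ = {S : Finset (Fin 4) | S.card = 2} ∧
          (∀ e : A, tetS (φ₁ e) = φ₀ (s e)) ∧
          (∀ e : A, tetTgt (φ₁ e) = φ₀ (t e)) ∧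
          (∀ e : A, φ₁ (f e) = tetF (φ₁ e)) ∧
          (∀ e : A, m e = 1))) :=
  triangulationQuiver_exceptional_classification_general s t f hout hsf hf3 bar hbar g hg hne hconn
    m
end

section
/- Every connected triangulation quiver (Q, f) with exactly two vertices is isomorphic, as a ribbon quiver, to the punctured-monogon triangulation quiver: vertices {1, 2}, arrows α : 1→1, β : 1→2, γ : 2→1, η : 2→2, with f(α) = β, f(β) = γ, f(γ) = α, f(η) = η. -/
/-!
Connectedness with two vertices gives an arrow `a` that is not a loop; then `a` is not fixed by
`f`, so `a, f a, f (f a)` is an `f`-orbit of length three. Its three sources cannot be distinct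
vertices, so the orbit contains a loop `α`. By the out-degree count at `s α`, the arrow
`γ = f (f α)` starts at the other vertex, which therefore has a second outgoing arrow `η`.
Since there are `2 * |V| = 4` arrows, `η` is the fourth one and must be fixed by `f`, hence is
a loop too. Sending `0, 1, 2, 3` to `α, f α, γ, η` is then an isomorphism from the punctured
monogon.
-/

namespace RibbonQuiver

variable {V A : Type*}

/-- The images `α, f α, f (f α), η` of the arrows `0, 1, 2, 3` of the punctured monogon. -/
def monogonArrows (f : A → A) (α η : A) : Fin 4 → A := ![α, f α, f (f α), η]

variable {s t : A → V} {f : A → A}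

theorem card_arrows_eq_two_mul [Fintype V] [Fintype A] [DecidableEq V]
    (hout : ∀ v : V, (Finset.univ.filter (fun a => s a = v)).card = 2) :
    Fintype.card A = 2 * Fintype.card V := by
  rw [← Finset.card_univ, Finset.card_eq_sum_card_fiberwise (f := s) (t := Finset.univ)
    (fun a _ => Finset.mem_univ _)]
  simp [hout, mul_comm]

theorem exists_source_ne_target [Nontrivial V]
    (hconn : ∀ u v : V, Relation.EqvGen (fun x y => ∃ e : A, s e = x ∧ t e = y) u v) :
    ∃ a, s a ≠ t a := by
  by_contra! hst
  obtain ⟨u, v, huv⟩ := exists_pair_ne V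
  refine huv (Relation.EqvGen.eqvGen_le ?_ u v (hconn u v))
  rintro _ _ ⟨e, rfl, rfl⟩
  exact hst e

theorem injective_of_iterate_three (hf3 : ∀ a, f (f (f a)) = a) : Function.Injective f :=
  Function.LeftInverse.injective (g := f ∘ f) hf3

theorem apply_apply_ne_apply (hf3 : ∀ a, f (f (f a)) = a) {a : A} (ha : f a ≠ a) :
    f (f a) ≠ f a :=
  fun h => ha (injective_of_iterate_three hf3 h)

theorem apply_apply_ne_self (hf3 : ∀ a, f (f (f a)) = a) {a : A} (ha : f a ≠ a) :
    f (f a) ≠ a :=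
  fun h => ha (by simpa only [h] using hf3 a)

theorem target_apply_apply (hsf : ∀ a, s (f a) = t a) (hf3 : ∀ a, f (f (f a)) = a) (a : A) :
    t (f (f a)) = s a := by
  rw [← hsf, hf3]

theorem apply_ne_self_of_source_ne_target (hsf : ∀ a, s (f a) = t a) {a : A} (ha : s a ≠ t a) :
    f a ≠ a :=
  fun h => ha (by rw [← hsf, h])

/-- With at most two vertices, the sources of `a`, `f a`, `f (f a)` cannot be pairwise
distinct. -/
theorem exists_loop_apply_ne_self [Fintype V] (hV : Fintype.card V ≤ 2)
    (hsf : ∀ a, s (f a) = t a) (hf3 : ∀ a, f (f (f a)) = a) {a : A} (ha : s a ≠ t a) :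
    ∃ α, s α = t α ∧ f α ≠ α := by
  classical
  by_contra! hloop
  have ha₀ := apply_ne_self_of_source_ne_target hsf ha
  have ha₁ : s (f a) ≠ t (f a) := fun h => apply_apply_ne_apply hf3 ha₀ (hloop _ h)
  have ha₂ : s (f (f a)) ≠ t (f (f a)) := fun h =>
    apply_apply_ne_self hf3 ha₀ ((hf3 a).symm.trans (hloop _ h)).symm
  rw [hsf, target_apply_apply hsf hf3] at ha₂
  rw [hsf] at ha₁
  have : ({s a, t a, t (f a)} : Finset V).card = 3 :=
    Finset.card_eq_three.mpr ⟨_, _, _, ha, ha₂.symm, ha₁, rfl⟩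
  have := Finset.card_le_univ ({s a, t a, t (f a)} : Finset V)
  omega

theorem source_apply_apply_ne_of_loop [Fintype A] [DecidableEq V]
    (hout : ∀ v : V, (Finset.univ.filter (fun a => s a = v)).card = 2)
    (hsf : ∀ a, s (f a) = t a) (hf3 : ∀ a, f (f (f a)) = a) {a : A} (hloop : s a = t a)
    (ha : f a ≠ a) : s (f (f a)) ≠ s a := by
  classical
  intro h
  have hsub : {a, f a, f (f a)} ⊆ Finset.univ.filter (fun b => s b = s a) := by
    simp only [Finset.insert_subset_iff, Finset.singleton_subset_iff, Finset.mem_filter,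
      Finset.mem_univ, true_and]
    exact ⟨(hsf a).trans hloop.symm, h⟩
  have hcard : ({a, f a, f (f a)} : Finset A).card = 3 :=
    Finset.card_eq_three.mpr ⟨_, _, _, ha.symm, (apply_apply_ne_self hf3 ha).symm,
      (apply_apply_ne_apply hf3 ha).symm, rfl⟩
  have := Finset.card_le_card hsub
  rw [hcard, hout] at this
  omega

theorem exists_ne_source_eq [Fintype A] [DecidableEq V]
    (hout : ∀ v : V, (Finset.univ.filter (fun a => s a = v)).card = 2) (b : A) :
    ∃ c, s c = s b ∧ c ≠ b := by
  have hcard : 1 < (Finset.univ.filter (fun c => s c = s b)).card := by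
    rw [hout]; norm_num
  obtain ⟨c, hc, hcb⟩ := Finset.exists_mem_ne hcard b
  exact ⟨c, (Finset.mem_filter.mp hc).2, hcb⟩

theorem exists_iso_puncturedMonogon_of_bijective (ψ₀ : Fin 2 → V) (ψ₁ : Fin 4 → A)
    (h₀ : Function.Bijective ψ₀) (h₁ : Function.Bijective ψ₁)
    (hs : ∀ i, s (ψ₁ i) = ψ₀ (puncturedMonogonS i))
    (ht : ∀ i, t (ψ₁ i) = ψ₀ (puncturedMonogonT i))
    (hf : ∀ i, f (ψ₁ i) = ψ₁ (puncturedMonogonF i)) :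
    ∃ (φ₀ : V ≃ Fin 2) (φ₁ : A ≃ Fin 4),
      (∀ e : A, puncturedMonogonS (φ₁ e) = φ₀ (s e)) ∧
      (∀ e : A, puncturedMonogonT (φ₁ e) = φ₀ (t e)) ∧
      (∀ e : A, φ₁ (f e) = puncturedMonogonF (φ₁ e)) := by
  set e₀ := Equiv.ofBijective ψ₀ h₀
  set e₁ := Equiv.ofBijective ψ₁ h₁
  refine ⟨e₀.symm, e₁.symm, ?_, ?_, ?_⟩ <;> intro e <;> obtain ⟨i, rfl⟩ := e₁.surjective e
  · simpa [e₀, e₁, Equiv.eq_symm_apply] using (hs i).symm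
  · simpa [e₀, e₁, Equiv.eq_symm_apply] using (ht i).symm
  · simpa [e₀, e₁, Equiv.symm_apply_eq] using hf i

theorem monogonArrows_injective (hsf : ∀ a, s (f a) = t a) (hf3 : ∀ a, f (f (f a)) = a)
    {α η : A} (hloop : s α = t α) (ha : f α ≠ α) (hη : s η ≠ s α) (hη' : η ≠ f (f α)) :
    Function.Injective (monogonArrows f α η) := by
  have h₀₁ : α ≠ f α := ha.symm
  have h₀₂ : α ≠ f (f α) := (apply_apply_ne_self hf3 ha).symm
  have h₁₂ : f α ≠ f (f α) := (apply_apply_ne_apply hf3 ha).symm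
  have h₀₃ : α ≠ η := fun h => hη (h ▸ rfl)
  have h₁₃ : f α ≠ η := fun h => hη (by rw [← h, hsf, hloop])
  intro i j hij
  fin_cases i <;> fin_cases j <;> simp_all [monogonArrows]

theorem apply_eq_self_of_monogonArrows_bijective (hf3 : ∀ a, f (f (f a)) = a) {α η : A}
    (hbij : Function.Bijective (monogonArrows f α η)) : f η = η := by
  have hinj := injective_of_iterate_three hf3
  have hne : ∀ i : Fin 4, i ≠ 3 → monogonArrows f α η i ≠ η := fun i hi h => hi (hbij.1 h)
  obtain ⟨i, hi⟩ := hbij.2 (f η)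
  fin_cases i
  · exact absurd (hinj ((hf3 α).trans hi)) (hne 2 (by decide))
  · exact absurd (hinj hi) (hne 0 (by decide))
  · exact absurd (hinj hi) (hne 1 (by decide))
  · exact hi.symm

end RibbonQuiver

open RibbonQuiver

theorem triangulationQuiver_two_vertices_general {V A : Type*} [Fintype V] [Fintype A]
    [DecidableEq V]
    (s t : A → V) (f : A → A)
    (hout : ∀ v : V, (Finset.univ.filter (fun a => s a = v)).card = 2)
    (hsf : ∀ a : A, s (f a) = t a)
    (hf3 : ∀ a : A, f (f (f a)) = a)
    (hconn : ∀ u v : V, Relation.EqvGen (fun x y => ∃ e : A, s e = x ∧ t e = y) u v)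
    (hV : Fintype.card V = 2) :
    ∃ (φ₀ : V ≃ Fin 2) (φ₁ : A ≃ Fin 4),
      (∀ e : A, puncturedMonogonS (φ₁ e) = φ₀ (s e)) ∧
      (∀ e : A, puncturedMonogonT (φ₁ e) = φ₀ (t e)) ∧
      (∀ e : A, φ₁ (f e) = puncturedMonogonF (φ₁ e)) := by
  have hA : Fintype.card A = 4 := by rw [card_arrows_eq_two_mul hout, hV]
  have : Nontrivial V := Fintype.one_lt_card_iff_nontrivial.mp (by omega)
  obtain ⟨a, ha⟩ := exists_source_ne_target hconn
  obtain ⟨α, hloop, hα⟩ := exists_loop_apply_ne_self hV.le hsf hf3 ha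
  have hγ := source_apply_apply_ne_of_loop hout hsf hf3 hloop hα
  obtain ⟨η, hη, hηγ⟩ := exists_ne_source_eq hout (f (f α))
  have hψ₀ : Function.Bijective ![s α, s (f (f α))] := by
    refine (Fintype.bijective_iff_injective_and_card _).mpr ⟨?_, by simp [hV]⟩
    intro i j
    fin_cases i <;> fin_cases j <;> simp [hγ, hγ.symm]
  have hψ₁ : Function.Bijective (monogonArrows f α η) :=
    (Fintype.bijective_iff_injective_and_card _).mpr
      ⟨monogonArrows_injective hsf hf3 hloop hα (hη.trans_ne hγ) hηγ, by simp [hA]⟩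
  have hfη := apply_eq_self_of_monogonArrows_bijective hf3 hψ₁
  have htη : t η = t (f α) := by rw [← hsf, hfη, hη, hsf]
  refine exists_iso_puncturedMonogon_of_bijective _ _ hψ₀ hψ₁ ?_ ?_ ?_ <;> intro i <;>
    fin_cases i <;>
    simp [monogonArrows, puncturedMonogonS, puncturedMonogonT, puncturedMonogonF, hsf, hf3,
      target_apply_apply hsf hf3, hloop, hη, hfη, htη]

/-- Every connected triangulation quiver with exactly two vertices is
isomorphic, as a ribbon quiver, to the punctured-monogon triangulation quiver. -/
theorem triangulationQuiver_two_vertices {V A : Type*} [Fintype V] [Fintype A]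
    [DecidableEq V] [DecidableEq A]
    (s t : A → V) (f : A → A)
    (hf : Function.Bijective f)
    (hout : ∀ v : V, (Finset.univ.filter (fun a => s a = v)).card = 2)
    (hin : ∀ v : V, (Finset.univ.filter (fun a => t a = v)).card = 2)
    (hsf : ∀ a : A, s (f a) = t a)
    (hf3 : ∀ a : A, f (f (f a)) = a)
    (hne : Nonempty V)
    (hconn : ∀ u v : V, Relation.EqvGen (fun x y => ∃ e : A, s e = x ∧ t e = y) u v)
    (hV : Fintype.card V = 2) :
    ∃ (φ₀ : V ≃ Fin 2) (φ₁ : A ≃ Fin 4),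
      (∀ e : A, puncturedMonogonS (φ₁ e) = φ₀ (s e)) ∧
      (∀ e : A, puncturedMonogonT (φ₁ e) = φ₀ (t e)) ∧
      (∀ e : A, φ₁ (f e) = puncturedMonogonF (φ₁ e)) :=
  triangulationQuiver_two_vertices_general s t f hout hsf hf3 hconn hV
end
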